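/- arXiv:2307.10748 — 4 statements merged into one kernel-verified Lean document; each statement's English description precedes it below -/
import Mathlib

section
/- Let a, b > 0 and φ, ψ ∈ ℝ. Then the operator norm of Ω(a,ψ) · Ω(b,φ)⁻¹ is at most max{a/b, b/a}·|cos(φ-ψ)| + max{ab, 1/(ab)}·|sin(φ-ψ)|. -/
/-!
With θ = φ - ψ one computes
Ω(a,ψ) Ω(b,φ)⁻¹ = cos θ · diag(a/b, b/a) + sin θ · [[0, ab], [-1/(ab), 0]].
A diagonal or antidiagonal 2×2 matrix has operator norm at most the largest absolute value of
its entries, so the triangle inequality gives the bound.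
-/

open Real

noncomputable def opNorm2 (M : Matrix (Fin 2) (Fin 2) ℝ) : ℝ :=
  ‖(Matrix.toEuclideanLin M).toContinuousLinearMap‖

noncomputable def OmegaMat (a ψ : ℝ) : Matrix (Fin 2) (Fin 2) ℝ :=
  !![a, 0; 0, a⁻¹] * !![Real.cos ψ, -Real.sin ψ; Real.sin ψ, Real.cos ψ]

lemma opNorm2_le_of_sq_le (M : Matrix (Fin 2) (Fin 2) ℝ) {C : ℝ} (hC : 0 ≤ C)
    (h : ∀ x y : ℝ, (M 0 0 * x + M 0 1 * y) ^ 2 + (M 1 0 * x + M 1 1 * y) ^ 2 ≤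
      C ^ 2 * (x ^ 2 + y ^ 2)) :
    opNorm2 M ≤ C := by
  refine ContinuousLinearMap.opNorm_le_bound _ hC fun v => le_of_sq_le_sq ?_ (by positivity)
  simpa [mul_pow, EuclideanSpace.norm_sq_eq, Fin.sum_univ_two, Matrix.mulVec, dotProduct]
    using h (v 0) (v 1)

lemma opNorm2_add_le (M N : Matrix (Fin 2) (Fin 2) ℝ) :
    opNorm2 (M + N) ≤ opNorm2 M + opNorm2 N := by
  simp only [opNorm2, map_add]
  exact norm_add_le _ _

lemma opNorm2_smul (r : ℝ) (M : Matrix (Fin 2) (Fin 2) ℝ) :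
    opNorm2 (r • M) = |r| * opNorm2 M := by
  simp only [opNorm2, map_smul]
  exact norm_smul r _

lemma sq_le_max_abs_sq (c d : ℝ) : c ^ 2 ≤ max |c| |d| ^ 2 ∧ d ^ 2 ≤ max |c| |d| ^ 2 := by
  constructor <;> rw [← sq_abs] <;> gcongr
  exacts [le_max_left _ _, le_max_right _ _]

lemma opNorm2_diagonal_le (c d : ℝ) : opNorm2 !![c, 0; 0, d] ≤ max |c| |d| := by
  refine opNorm2_le_of_sq_le _ ((abs_nonneg c).trans (le_max_left _ _)) fun x y => ?_
  obtain ⟨hc, hd⟩ := sq_le_max_abs_sq c d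
  simp only [Matrix.of_apply, Matrix.cons_val', Matrix.cons_val_zero, Matrix.cons_val_one,
    Matrix.empty_val', Matrix.cons_val_fin_one, zero_mul, add_zero, zero_add]
  nlinarith [sq_nonneg x, sq_nonneg y]

lemma opNorm2_antidiagonal_le (c d : ℝ) : opNorm2 !![0, c; d, 0] ≤ max |c| |d| := by
  refine opNorm2_le_of_sq_le _ ((abs_nonneg c).trans (le_max_left _ _)) fun x y => ?_
  obtain ⟨hc, hd⟩ := sq_le_max_abs_sq c d
  simp only [Matrix.of_apply, Matrix.cons_val', Matrix.cons_val_zero, Matrix.cons_val_one,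
    Matrix.empty_val', Matrix.cons_val_fin_one, zero_mul, add_zero, zero_add]
  nlinarith [sq_nonneg x, sq_nonneg y]

lemma OmegaMat_eq (a ψ : ℝ) :
    OmegaMat a ψ = !![a * cos ψ, -(a * sin ψ); a⁻¹ * sin ψ, a⁻¹ * cos ψ] := by
  simp [OmegaMat]

lemma OmegaMat_inv {b : ℝ} (hb : b ≠ 0) (φ : ℝ) :
    (OmegaMat b φ)⁻¹ = !![cos φ / b, b * sin φ; -sin φ / b, b * cos φ] := by
  refine Matrix.inv_eq_right_inv ?_
  rw [OmegaMat_eq, Matrix.mul_fin_two, Matrix.one_fin_two]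
  field_simp
  simp [sin_sq_add_cos_sq, cos_sq_add_sin_sq]

lemma OmegaMat_mul_inv {a b : ℝ} (ha : a ≠ 0) (hb : b ≠ 0) (φ ψ : ℝ) :
    OmegaMat a ψ * (OmegaMat b φ)⁻¹ =
      cos (φ - ψ) • !![a / b, 0; 0, b / a] +
        sin (φ - ψ) • !![0, a * b; -(1 / (a * b)), 0] := by
  rw [OmegaMat_inv hb, OmegaMat_eq, Matrix.mul_fin_two, cos_sub, sin_sub]
  ext i j
  fin_cases i <;> fin_cases j <;> simp <;> field_simp <;> ring

theorem stmt2 (a b : ℝ) (ha : 0 < a) (hb : 0 < b) (φ ψ : ℝ) :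
    opNorm2 (OmegaMat a ψ * (OmegaMat b φ)⁻¹) ≤
      max (a / b) (b / a) * |Real.cos (φ - ψ)| +
        max (a * b) (1 / (a * b)) * |Real.sin (φ - ψ)| := by
  have hab : 0 < a * b := mul_pos ha hb
  have hdiag : opNorm2 !![a / b, 0; 0, b / a] ≤ max (a / b) (b / a) := by
    simpa only [abs_of_pos (div_pos ha hb), abs_of_pos (div_pos hb ha)]
      using opNorm2_diagonal_le (a / b) (b / a)
  have hantidiag : opNorm2 !![0, a * b; -(1 / (a * b)), 0] ≤ max (a * b) (1 / (a * b)) := by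
    simpa only [abs_neg, abs_of_pos hab, abs_of_pos (one_div_pos.2 hab)]
      using opNorm2_antidiagonal_le (a * b) (-(1 / (a * b)))
  rw [OmegaMat_mul_inv ha.ne' hb.ne']
  calc _ ≤ |cos (φ - ψ)| * opNorm2 !![a / b, 0; 0, b / a] +
        |sin (φ - ψ)| * opNorm2 !![0, a * b; -(1 / (a * b)), 0] :=
        (opNorm2_add_le _ _).trans_eq (by rw [opNorm2_smul, opNorm2_smul])
    _ ≤ |cos (φ - ψ)| * max (a / b) (b / a) + |sin (φ - ψ)| * max (a * b) (1 / (a * b)) := by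
        gcongr
    _ = _ := by ring
end

section
/- Let W_j(z) = I + z·l_j·ξ_{φ_j}ξ_{φ_j}ᵀ·J for j = 1,…,N, where l_j > 0, φ_j ∈ ℝ, z ∈ ℂ. For any choice of a_j ∈ (0,1], j = 1,…,N, the norm of the product W_1(z)·…·W_N(z) is at most (a_1 a_N)⁻¹ · ∏_{j=1}^N (1 + |z| l_j a_j²) · ∏_{j=1}^{N-1} ( max{a_j/a_{j+1}, a_{j+1}/a_j}·|cos(φ_j − φ_{j+1})| + |sin(φ_j − φ_{j+1})|/(a_j a_{j+1}) ). -/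
/-- The operator norm of a 2×2 complex matrix, acting on Euclidean ℂ². -/
noncomputable def opNormC (M : Matrix (Fin 2) (Fin 2) ℂ) : ℝ :=
  ‖(Matrix.toEuclideanLin M).toContinuousLinearMap‖

/-- W_j(z) = I + z·l_j·ξ_{φ_j}ξ_{φ_j}ᵀ·J (as a complex 2×2 matrix). -/
noncomputable def Wmat (l : ℕ → ℝ) (φ : ℕ → ℝ) (z : ℂ) (j : ℕ) :
    Matrix (Fin 2) (Fin 2) ℂ :=
  1 + (z * (l j : ℂ)) •
    (!![(Real.cos (φ j) : ℂ) * (Real.cos (φ j) : ℂ),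
        (Real.cos (φ j) : ℂ) * (Real.sin (φ j) : ℂ);
        (Real.sin (φ j) : ℂ) * (Real.cos (φ j) : ℂ),
        (Real.sin (φ j) : ℂ) * (Real.sin (φ j) : ℂ)] *
      !![0, -1; 1, 0])

/-!
Each factor is a rotated shear, `W_j = R(φ_j) S(z l_j) R(φ_j)⁻¹` with `S(c) = [[1, -c], [0, 1]]`,
and conjugating a shear by `diag(t⁻¹, t)` multiplies its parameter by `t²`. Hence
`W_j = F_j S(a_j² z l_j) F_j⁻¹` for `F_j = R(φ_j) diag(a_j⁻¹, a_j)`, and the product telescopes to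
`F_1 S_1 (F_1⁻¹ F_2) S_2 ⋯ (F_{N-1}⁻¹ F_N) S_N F_N⁻¹`. Submultiplicativity of the norm finishes the
proof: `‖F_1‖ = a_1⁻¹`, `‖F_N⁻¹‖ = a_N⁻¹`, `‖S_j‖ ≤ 1 + |z| l_j a_j²`, and `F_j⁻¹ F_{j+1}` is the sum of
a diagonal matrix of norm `max(a_j/a_{j+1}, a_{j+1}/a_j) |cos(φ_j - φ_{j+1})|` and an antidiagonal one
of norm at most `|sin(φ_j - φ_{j+1})| / (a_j a_{j+1})`.
-/

section Telescoping

open Finset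

variable {R : Type*} [NormedRing R] (w g h m : ℕ → R)

theorem norm_mul_list_prod_mul_le {N : ℕ} (hN : 1 ≤ N)
    (hgh : ∀ j, 1 ≤ j → j ≤ N → g j * h j = 1 ∧ h j * g j = 1)
    (hw : ∀ j, 1 ≤ j → j ≤ N → w j * g j = g j * m j) :
    ‖h 1 * ((List.range N).map fun i => w (i + 1)).prod * g N‖ ≤
      (∏ j ∈ Icc 1 N, ‖m j‖) * ∏ j ∈ Icc 1 (N - 1), ‖h j * g (j + 1)‖ := by
  induction N, hN using Nat.le_induction with
  | base =>
    have h_one : h 1 * w 1 * g 1 = m 1 := by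
      rw [mul_assoc, hw 1 le_rfl le_rfl, ← mul_assoc, (hgh 1 le_rfl le_rfl).2, one_mul]
    simp [h_one]
  | succ k hk ih =>
    set P := ((List.range k).map fun i => w (i + 1)).prod
    have hstep : h 1 * ((List.range (k + 1)).map fun i => w (i + 1)).prod * g (k + 1) =
        h 1 * P * g k * (h k * g (k + 1)) * m (k + 1) := by
      rw [List.range_succ, List.map_append, List.prod_append, List.map_singleton,
        List.prod_singleton]
      simp only [mul_assoc]
      rw [hw (k + 1) (by omega) le_rfl, ← mul_assoc (g k), (hgh k hk (by omega)).1, one_mul]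
    have hgaps : ∏ j ∈ Icc 1 k, ‖h j * g (j + 1)‖ =
        (∏ j ∈ Icc 1 (k - 1), ‖h j * g (j + 1)‖) * ‖h k * g (k + 1)‖ := by
      obtain ⟨n, rfl⟩ : ∃ n, k = n + 1 := ⟨k - 1, by omega⟩
      exact prod_Icc_succ_top (by omega) _
    rw [hstep, prod_Icc_succ_top (by omega), Nat.add_sub_cancel, hgaps]
    calc _ ≤ ‖h 1 * P * g k‖ * ‖h k * g (k + 1)‖ * ‖m (k + 1)‖ := norm_mul₃_le
      _ ≤ _ := by
        grw [ih (fun j hj _ => hgh j hj (by omega)) fun j hj _ => hw j hj (by omega)]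
        exact le_of_eq (by ring)

theorem norm_list_prod_le_of_mul_eq_mul {N : ℕ} (hN : 1 ≤ N)
    (hgh : ∀ j, 1 ≤ j → j ≤ N → g j * h j = 1 ∧ h j * g j = 1)
    (hw : ∀ j, 1 ≤ j → j ≤ N → w j * g j = g j * m j) :
    ‖((List.range N).map fun i => w (i + 1)).prod‖ ≤
      ‖g 1‖ * ‖h N‖ * (∏ j ∈ Icc 1 N, ‖m j‖) * ∏ j ∈ Icc 1 (N - 1), ‖h j * g (j + 1)‖ := by
  set P := ((List.range N).map fun i => w (i + 1)).prod
  have hP : P = g 1 * (h 1 * P * g N) * h N := by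
    simp only [mul_assoc, (hgh N hN le_rfl).1, mul_one]
    rw [← mul_assoc, (hgh 1 le_rfl hN).1, one_mul]
  calc ‖P‖ = ‖g 1 * (h 1 * P * g N) * h N‖ := congrArg norm hP
    _ ≤ ‖g 1‖ * ‖h 1 * P * g N‖ * ‖h N‖ := norm_mul₃_le
    _ ≤ _ := by
      grw [norm_mul_list_prod_mul_le w g h m hN hgh hw]
      exact le_of_eq (by ring)

end Telescoping

namespace TransferMatrix

open scoped Matrix.Norms.L2Operator
open Matrix

noncomputable def rot (θ : ℝ) : Matrix (Fin 2) (Fin 2) ℂ :=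
  !![(Real.cos θ : ℂ), -(Real.sin θ : ℂ); (Real.sin θ : ℂ), (Real.cos θ : ℂ)]

noncomputable def scale (t : ℂ) : Matrix (Fin 2) (Fin 2) ℂ := diagonal ![t, t⁻¹]

def antidiag (x y : ℂ) : Matrix (Fin 2) (Fin 2) ℂ := !![0, x; y, 0]

def shear (c : ℂ) : Matrix (Fin 2) (Fin 2) ℂ := 1 + antidiag (-c) 0

lemma rot_mul_rot (α β : ℝ) : rot α * rot β = rot (α + β) := by
  ext i j
  fin_cases i <;> fin_cases j <;>
    simp [rot, Matrix.mul_apply, Real.cos_add, Real.sin_add] <;> ring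

lemma rot_zero : rot 0 = 1 := by
  ext i j
  fin_cases i <;> fin_cases j <;> simp [rot]

lemma rot_mem_unitary (θ : ℝ) : rot θ ∈ unitary (Matrix (Fin 2) (Fin 2) ℂ) := by
  have h : ((Real.cos θ : ℂ)) ^ 2 + (Real.sin θ : ℂ) ^ 2 = 1 := by
    exact_mod_cast Real.cos_sq_add_sin_sq θ
  rw [← unitaryGroup, mem_unitaryGroup_iff]
  ext i j
  fin_cases i <;> fin_cases j <;>
    simp [rot, Matrix.mul_apply, star_eq_conjTranspose, -Complex.ofReal_cos,
      -Complex.ofReal_sin] <;>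
    first | linear_combination h | ring

lemma norm_vec_two (x y : ℂ) : ‖![x, y]‖ = max ‖x‖ ‖y‖ := by
  simp [Pi.norm_def, Fin.univ_succ]

lemma norm_scale (t : ℂ) : ‖scale t‖ = max ‖t‖ ‖t⁻¹‖ := by
  rw [scale, l2_opNorm_diagonal, norm_vec_two]

lemma norm_scale_inv (t : ℂ) : ‖scale t⁻¹‖ = ‖scale t‖ := by
  rw [norm_scale, norm_scale, inv_inv, max_comm]

lemma norm_scale_of_pos_of_le_one {t : ℝ} (h0 : 0 < t) (h1 : t ≤ 1) : ‖scale t‖ = t⁻¹ := by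
  rw [norm_scale, norm_inv, Complex.norm_real, Real.norm_of_nonneg h0.le]
  exact max_eq_right (h1.trans (one_le_inv₀ h0 |>.2 h1))

lemma scale_inv_mul_scale {t : ℂ} (ht : t ≠ 0) : scale t⁻¹ * scale t = 1 := by
  rw [scale, scale, diagonal_mul_diagonal, ← diagonal_one]
  congr 1
  ext i
  fin_cases i <;> simp [ht]

lemma scale_mul_scale_inv {t : ℂ} (ht : t ≠ 0) : scale t * scale t⁻¹ = 1 := by
  simpa using scale_inv_mul_scale (inv_ne_zero ht)

lemma antidiag_eq_diagonal_mul (x y : ℂ) :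
    antidiag x y = diagonal ![x, y] * antidiag 1 1 := by
  ext i j
  fin_cases i <;> fin_cases j <;> simp [antidiag]

lemma antidiag_one_mem_unitary : antidiag 1 1 ∈ unitary (Matrix (Fin 2) (Fin 2) ℂ) := by
  rw [← unitaryGroup, mem_unitaryGroup_iff]
  ext i j
  fin_cases i <;> fin_cases j <;> simp [antidiag, Matrix.mul_apply, star_eq_conjTranspose]

lemma norm_antidiag (x y : ℂ) : ‖antidiag x y‖ = max ‖x‖ ‖y‖ := by
  rw [antidiag_eq_diagonal_mul, CStarRing.norm_mul_mem_unitary _ antidiag_one_mem_unitary,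
    l2_opNorm_diagonal, norm_vec_two]

lemma norm_shear_le (c : ℂ) : ‖shear c‖ ≤ 1 + ‖c‖ := by
  calc ‖shear c‖ ≤ ‖(1 : Matrix (Fin 2) (Fin 2) ℂ)‖ + ‖antidiag (-c) 0‖ := norm_add_le _ _
    _ = 1 + ‖c‖ := by rw [norm_one, norm_antidiag]; simp

lemma shear_mul_scale_inv (c t : ℂ) :
    shear c * scale t⁻¹ = scale t⁻¹ * shear (t ^ 2 * c) := by
  ext i j
  fin_cases i <;> fin_cases j <;> simp [shear, scale, antidiag]
  rcases eq_or_ne t 0 with rfl | ht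
  · simp
  · field_simp

lemma Wmat_eq_rot_mul_shear_mul_rot (l φ : ℕ → ℝ) (z : ℂ) (j : ℕ) :
    Wmat l φ z j = rot (φ j) * shear (z * l j) * rot (-φ j) := by
  have hconj : rot (φ j) * antidiag (-(z * l j)) 0 * rot (-φ j) = (z * (l j : ℂ)) •
      (!![(Real.cos (φ j) : ℂ) * (Real.cos (φ j) : ℂ),
        (Real.cos (φ j) : ℂ) * (Real.sin (φ j) : ℂ);
        (Real.sin (φ j) : ℂ) * (Real.cos (φ j) : ℂ),
        (Real.sin (φ j) : ℂ) * (Real.sin (φ j) : ℂ)] * !![0, -1; 1, 0]) := by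
    ext i k
    fin_cases i <;> fin_cases k <;>
      simp [rot, antidiag, Matrix.mul_apply, -Complex.ofReal_cos, -Complex.ofReal_sin] <;> ring
  rw [Wmat, shear, mul_add, add_mul, mul_one, rot_mul_rot, add_neg_cancel, rot_zero, hconj]

lemma scale_mul_rot_mul_scale_inv (α β θ : ℝ) :
    scale α * rot θ * scale (β : ℂ)⁻¹ =
      diagonal ![((α / β * Real.cos θ : ℝ) : ℂ), ((β / α * Real.cos θ : ℝ) : ℂ)] +
        antidiag ((-(α * β * Real.sin θ) : ℝ) : ℂ) ((Real.sin θ / (α * β) : ℝ) : ℂ) := by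
  ext i j
  fin_cases i <;> fin_cases j <;>
    simp [scale, rot, antidiag, Matrix.mul_apply, -Complex.ofReal_cos, -Complex.ofReal_sin] <;>
    ring

lemma norm_scale_mul_rot_mul_scale_inv_le {α β : ℝ} (hα : 0 < α) (hβ : 0 < β)
    (hαβ : α * β ≤ 1) (θ : ℝ) :
    ‖scale α * rot θ * scale (β : ℂ)⁻¹‖ ≤
      max (α / β) (β / α) * |Real.cos θ| + |Real.sin θ| / (α * β) := by
  have hsin : α * β * |Real.sin θ| ≤ |Real.sin θ| / (α * β) := by
    have hsq : α * β * (α * β) ≤ 1 := by nlinarith [mul_pos hα hβ]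
    rw [le_div_iff₀ (by positivity)]
    nlinarith [mul_le_mul_of_nonneg_right hsq (abs_nonneg (Real.sin θ))]
  rw [scale_mul_rot_mul_scale_inv]
  refine (norm_add_le _ _).trans (add_le_add ?_ ?_)
  · rw [l2_opNorm_diagonal, norm_vec_two]
    simp only [Complex.norm_real, Real.norm_eq_abs, abs_mul, abs_of_pos (div_pos hα hβ),
      abs_of_pos (div_pos hβ hα)]
    rw [max_mul_of_nonneg _ _ (abs_nonneg _)]
  · rw [norm_antidiag]
    simp only [Complex.norm_real, Real.norm_eq_abs, abs_neg, abs_mul, abs_div,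
      abs_of_pos (mul_pos hα hβ)]
    exact max_le hsin le_rfl

noncomputable def frame (θ t : ℝ) : Matrix (Fin 2) (Fin 2) ℂ := rot θ * scale (t : ℂ)⁻¹

noncomputable def frameInv (θ t : ℝ) : Matrix (Fin 2) (Fin 2) ℂ := scale t * rot (-θ)

lemma frame_mul_frameInv (θ : ℝ) {t : ℝ} (ht : t ≠ 0) : frame θ t * frameInv θ t = 1 := by
  rw [frame, frameInv, mul_assoc, ← mul_assoc (scale _),
    scale_inv_mul_scale (Complex.ofReal_ne_zero.2 ht), one_mul, rot_mul_rot,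
    add_neg_cancel, rot_zero]

lemma frameInv_mul_frame (θ t θ' t' : ℝ) :
    frameInv θ t * frame θ' t' = scale t * rot (θ' - θ) * scale (t' : ℂ)⁻¹ := by
  rw [frame, frameInv, mul_assoc, ← mul_assoc (rot _), rot_mul_rot, neg_add_eq_sub, mul_assoc]

lemma frameInv_mul_frame_self (θ : ℝ) {t : ℝ} (ht : t ≠ 0) :
    frameInv θ t * frame θ t = 1 := by
  rw [frameInv_mul_frame, sub_self, rot_zero, mul_one,
    scale_mul_scale_inv (Complex.ofReal_ne_zero.2 ht)]

lemma norm_frame {t : ℝ} (h0 : 0 < t) (h1 : t ≤ 1) (θ : ℝ) : ‖frame θ t‖ = t⁻¹ := by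
  rw [frame, CStarRing.norm_mem_unitary_mul _ (rot_mem_unitary θ), norm_scale_inv,
    norm_scale_of_pos_of_le_one h0 h1]

lemma norm_frameInv {t : ℝ} (h0 : 0 < t) (h1 : t ≤ 1) (θ : ℝ) : ‖frameInv θ t‖ = t⁻¹ := by
  rw [frameInv, CStarRing.norm_mul_mem_unitary _ (rot_mem_unitary _),
    norm_scale_of_pos_of_le_one h0 h1]

lemma norm_frameInv_mul_frame_le {s t : ℝ} (hs0 : 0 < s) (hs1 : s ≤ 1) (ht0 : 0 < t)
    (ht1 : t ≤ 1) (θ θ' : ℝ) :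
    ‖frameInv θ s * frame θ' t‖ ≤
      max (s / t) (t / s) * |Real.cos (θ - θ')| + |Real.sin (θ - θ')| / (s * t) := by
  rw [frameInv_mul_frame, ← neg_sub θ' θ, Real.cos_neg, Real.sin_neg, abs_neg]
  exact norm_scale_mul_rot_mul_scale_inv_le hs0 ht0 (mul_le_one₀ hs1 ht0.le ht1) _

lemma Wmat_mul_frame (l φ a : ℕ → ℝ) (z : ℂ) (j : ℕ) :
    Wmat l φ z j * frame (φ j) (a j) = frame (φ j) (a j) * shear (a j ^ 2 * (z * l j)) := by
  rw [Wmat_eq_rot_mul_shear_mul_rot, frame, mul_assoc, ← mul_assoc (rot _), rot_mul_rot,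
    neg_add_cancel, rot_zero, one_mul, mul_assoc, shear_mul_scale_inv, ← mul_assoc]

lemma norm_shear_sq_mul_le {l : ℝ} (hl : 0 ≤ l) (a : ℝ) (z : ℂ) :
    ‖shear (a ^ 2 * (z * l))‖ ≤ 1 + ‖z‖ * l * a ^ 2 := by
  refine (norm_shear_le _).trans_eq ?_
  rw [norm_mul, norm_mul, norm_pow, Complex.norm_real, Complex.norm_real,
    Real.norm_of_nonneg hl, Real.norm_eq_abs, sq_abs]
  ring

lemma opNormC_eq_norm (M : Matrix (Fin 2) (Fin 2) ℂ) : opNormC M = ‖M‖ := rfl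

end TransferMatrix

open scoped Matrix.Norms.L2Operator
open TransferMatrix

theorem stmt3 (N : ℕ) (hN : 1 ≤ N) (l φ a : ℕ → ℝ)
    (hl : ∀ j, 1 ≤ j → j ≤ N → 0 < l j)
    (ha : ∀ j, 1 ≤ j → j ≤ N → 0 < a j ∧ a j ≤ 1) (z : ℂ) :
    opNormC (((List.range N).map (fun i => Wmat l φ z (i + 1))).prod) ≤
      (a 1 * a N)⁻¹ *
        (∏ j ∈ Finset.Icc 1 N, (1 + ‖z‖ * l j * a j ^ 2)) *
        (∏ j ∈ Finset.Icc 1 (N - 1),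
          (max (a j / a (j + 1)) (a (j + 1) / a j) * |Real.cos (φ j - φ (j + 1))| +
            |Real.sin (φ j - φ (j + 1))| / (a j * a (j + 1)))) := by
  have ha1 := ha 1 le_rfl hN
  have haN := ha N hN le_rfl
  have hframe : ∀ j, 1 ≤ j → j ≤ N → frame (φ j) (a j) * frameInv (φ j) (a j) = 1 ∧
      frameInv (φ j) (a j) * frame (φ j) (a j) = 1 := fun j hj hjN =>
    have hne := (ha j hj hjN).1.ne'
    ⟨frame_mul_frameInv _ hne, frameInv_mul_frame_self _ hne⟩
  rw [opNormC_eq_norm, mul_inv]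
  refine (norm_list_prod_le_of_mul_eq_mul _ _ _ _ hN hframe
    fun j _ _ => Wmat_mul_frame l φ a z j).trans ?_
  have hinv1 : 0 ≤ (a 1)⁻¹ := inv_nonneg.2 ha1.1.le
  have hinvN : 0 ≤ (a N)⁻¹ := inv_nonneg.2 haN.1.le
  gcongr with j hj j hj
  · refine mul_nonneg (mul_nonneg hinv1 hinvN) (Finset.prod_nonneg fun j hj => ?_)
    obtain ⟨hj1, hjN⟩ := Finset.mem_Icc.1 hj
    have := hl j hj1 hjN
    positivity
  · exact (norm_frame ha1.1 ha1.2 _).le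
  · exact (norm_frameInv haN.1 haN.2 _).le
  · obtain ⟨hj1, hjN⟩ := Finset.mem_Icc.1 hj
    exact norm_shear_sq_mul_le (hl j hj1 hjN).le _ _
  · obtain ⟨hj1, hjN⟩ := Finset.mem_Icc.1 hj
    have haj := ha j hj1 (by omega)
    have haj' := ha (j + 1) (by omega) (by omega)
    exact norm_frameInv_mul_frame_le haj.1 haj.2 haj'.1 haj'.2 _ _
end

section
/- Let (φ_j)_{j=1}^∞ be a sequence of real numbers with ∑_{j=1}^∞ |sin(φ_{j+1} − φ_j)| < ∞. Then there exists a sequence (k_j) of integers such that (φ_j + k_j·π)_{j=1}^∞ converges to a real limit ψ. -/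
/-!
Reducing an angle `x` modulo `π` to `x - round (x / π) * π ∈ [-π/2, π/2]` leaves `|sin x|` unchanged,
and on `[-π/2, π/2]` Jordan's inequality `2/π * |y| ≤ |sin y|` holds. Hence the increments
`φ (j+1) - φ j`, each reduced modulo `π`, form an absolutely summable series, and its partial sums are
`φ j` shifted by integer multiples of `π`.
-/

open Real Finset

lemma abs_sub_round_div_mul_le {α : Type*} [Field α] [LinearOrder α] [IsStrictOrderedRing α]
    [FloorRing α] {p : α} (hp : 0 < p) (x : α) : |x - round (x / p) * p| ≤ p / 2 := by
  have hx : x - round (x / p) * p = (x / p - round (x / p)) * p := by field_simp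
  rw [hx, abs_mul, abs_of_pos hp]
  nlinarith [abs_sub_round (x / p)]

lemma abs_sin_sub_int_mul_pi (x : ℝ) (n : ℤ) : |sin (x - n * π)| = |sin x| := by
  rw [sin_sub_int_mul_pi, abs_mul, abs_zpow, abs_neg, abs_one, one_zpow, one_mul]

lemma abs_sub_round_div_pi_mul_pi_le (x : ℝ) : |x - round (x / π) * π| ≤ π / 2 * |sin x| := by
  have jordan := mul_abs_le_abs_sin (abs_sub_round_div_mul_le pi_pos x)
  rw [abs_sin_sub_int_mul_pi] at jordan
  calc |x - round (x / π) * π| = π / 2 * (2 / π * |x - round (x / π) * π|) := by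
        field_simp
    _ ≤ π / 2 * |sin x| := by gcongr

theorem stmt5 (φ : ℕ → ℝ)
    (h : Summable fun j => |Real.sin (φ (j + 1) - φ j)|) :
    ∃ (k : ℕ → ℤ) (ψ : ℝ),
      Filter.Tendsto (fun j => φ j + (k j : ℝ) * Real.pi) Filter.atTop (nhds ψ) := by
  set d : ℕ → ℝ := fun j => φ (j + 1) - φ j
  set reduced : ℕ → ℝ := fun j => d j - round (d j / π) * π
  have summable_reduced : Summable reduced :=
    .of_norm_bounded (h.mul_left (π / 2)) fun j => abs_sub_round_div_pi_mul_pi_le (d j)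
  refine ⟨fun j => -∑ i ∈ range j, round (d i / π), φ 0 + ∑' i, reduced i, ?_⟩
  have partial_sums : ∀ j, φ j + ((-∑ i ∈ range j, round (d i / π) : ℤ) : ℝ) * π
      = φ 0 + ∑ i ∈ range j, reduced i := by
    intro j
    rw [sum_sub_distrib, ← sum_mul, sum_range_sub φ j]
    push_cast
    ring
  simp only [partial_sums]
  exact summable_reduced.hasSum.tendsto_sum_nat.const_add _
end

section
/- Let a : [1,∞) → (0,∞) be slowly varying (regularly varying of index 0) and bounded on compact subsets of [1,∞). For R ≥ a(1) define b(R) := sup{ t ∈ [1,∞) : sup_{1≤s≤t} a(s)/R ≤ 1 } ∈ [1,∞]. Then for every ρ > 0 there exists R₀ such that R^ρ ≤ b(R) for all R ≥ R₀. -/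
/-!
Slow variation at the single scale `2` already gives `a (2 r) ≤ 2 ^ ε a r` for large `r`; since the
bound `C s ^ ε` reproduces itself under doubling, local boundedness propagates it to all `s ≥ 1`
(Potter's bound). With `ε = 1 / (2ρ)` and `R ≥ C²` this gives `a s ≤ C √R ≤ R` on `[1, R ^ ρ]`,
so `R ^ ρ` lies in the set whose supremum is `b(R)`.
-/

open Filter Topology

/-- b(R) := sup{ t ∈ [1,∞) : sup_{1≤s≤t} a(s)/R ≤ 1 }, as an element of [1,∞]. -/
noncomputable def bFun (a : ℝ → ℝ) (R : ℝ) : ENNReal :=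
  sSup (ENNReal.ofReal '' {t : ℝ | 1 ≤ t ∧ ∀ s, 1 ≤ s → s ≤ t → a s / R ≤ 1})

theorem le_mul_rpow_of_doubling {g : ℝ → ℝ} {r₀ C ε : ℝ} (hr₀ : 1 ≤ r₀) (hε : 0 ≤ ε)
    (hC : 0 ≤ C) (hbdd : ∀ s ∈ Set.Icc 1 (2 * r₀), g s ≤ C)
    (hdouble : ∀ r, r₀ ≤ r → g (2 * r) ≤ 2 ^ ε * g r) {s : ℝ} (hs : 1 ≤ s) :
    g s ≤ C * s ^ ε := by
  have hbase : ∀ s, 1 ≤ s → s ≤ 2 * r₀ → g s ≤ C * s ^ ε := fun s hs hs' =>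
    (hbdd s ⟨hs, hs'⟩).trans (le_mul_of_one_le_right hC (Real.one_le_rpow hs hε))
  have hdyadic : ∀ n : ℕ, ∀ s, 1 ≤ s → s ≤ 2 ^ n * r₀ → g s ≤ C * s ^ ε := by
    intro n
    induction n with
    | zero => exact fun s hs hs' => hbase s hs (by linarith)
    | succ n ih =>
      intro s hs hs'
      rcases le_or_gt s (2 * r₀) with hsmall | hlarge
      · exact hbase s hs hsmall
      have hhalf : r₀ ≤ s / 2 := by linarith
      calc g s = g (2 * (s / 2)) := by ring_nf
        _ ≤ 2 ^ ε * g (s / 2) := hdouble _ hhalf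
        _ ≤ 2 ^ ε * (C * (s / 2) ^ ε) := by
            gcongr
            exact ih _ (by linarith) (by rw [pow_succ] at hs'; linarith)
        _ = C * s ^ ε := by
            rw [Real.div_rpow (by linarith) zero_le_two]
            field_simp
  obtain ⟨n, hn⟩ := pow_unbounded_of_one_lt (s / r₀) one_lt_two
  exact hdyadic n s hs ((div_lt_iff₀ (by linarith)).mp hn).le

section SlowVariation

variable {a : ℝ → ℝ}

theorem eventually_le_rpow_mul_of_tendsto_div (hpos : ∀ t, 1 ≤ t → 0 < a t)
    (h2 : Tendsto (fun r => a (2 * r) / a r) atTop (𝓝 1)) {ε : ℝ} (hε : 0 < ε) :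
    ∀ᶠ r in atTop, a (2 * r) ≤ 2 ^ ε * a r := by
  have hlt : (1 : ℝ) < 2 ^ ε := Real.one_lt_rpow one_lt_two hε
  filter_upwards [h2.eventually (eventually_le_nhds hlt), eventually_ge_atTop 1] with r hr hr1
  exact (div_le_iff₀ (hpos r hr1)).mp hr

theorem exists_le_mul_rpow_of_tendsto_div (hpos : ∀ t, 1 ≤ t → 0 < a t)
    (h2 : Tendsto (fun r => a (2 * r) / a r) atTop (𝓝 1))
    (hloc : ∀ T, 1 ≤ T → ∃ C, ∀ s ∈ Set.Icc (1 : ℝ) T, a s ≤ C) {ε : ℝ} (hε : 0 < ε) :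
    ∃ C, 1 ≤ C ∧ ∀ s, 1 ≤ s → a s ≤ C * s ^ ε := by
  obtain ⟨r₁, hr₁⟩ := eventually_atTop.mp (eventually_le_rpow_mul_of_tendsto_div hpos h2 hε)
  set r₀ := max r₁ 1
  obtain ⟨C, hC⟩ := hloc (2 * r₀) (by linarith [le_max_right r₁ 1])
  refine ⟨max C 1, le_max_right _ _, fun s hs => ?_⟩
  refine le_mul_rpow_of_doubling (le_max_right r₁ 1) hε.le (by positivity)
    (fun s hs => (hC s hs).trans (le_max_left _ _)) (fun r hr => hr₁ r ?_) hs
  exact (le_max_left _ _).trans hr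

theorem ofReal_le_bFun {R t : ℝ} (hR : 0 < R) (ht : 1 ≤ t)
    (h : ∀ s, 1 ≤ s → s ≤ t → a s ≤ R) : ENNReal.ofReal t ≤ bFun a R :=
  le_sSup ⟨t, ⟨ht, fun s hs hst => (div_le_one hR).mpr (h s hs hst)⟩, rfl⟩

end SlowVariation

theorem stmt6 (a : ℝ → ℝ)
    (hpos : ∀ t, 1 ≤ t → 0 < a t)
    (hsv : ∀ l : ℝ, 0 < l →
      Tendsto (fun r => a (l * r) / a r) atTop (nhds 1))
    (hloc : ∀ T, 1 ≤ T → ∃ C, ∀ s ∈ Set.Icc (1 : ℝ) T, a s ≤ C) :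
    ∀ ρ : ℝ, 0 < ρ → ∃ R₀ : ℝ, ∀ R, a 1 ≤ R → R₀ ≤ R →
      ENNReal.ofReal (R ^ ρ) ≤ bFun a R := by
  intro ρ hρ
  obtain ⟨C, hC1, hC⟩ :=
    exists_le_mul_rpow_of_tendsto_div hpos (hsv 2 two_pos) hloc (ε := 1 / (2 * ρ)) (by positivity)
  refine ⟨C ^ 2, fun R _ hR => ?_⟩
  have hR1 : 1 ≤ R := (one_le_pow₀ hC1).trans hR
  have hCR : C ≤ √R := Real.le_sqrt_of_sq_le hR
  refine ofReal_le_bFun (by linarith) (Real.one_le_rpow hR1 hρ.le) fun s hs hsR => ?_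
  calc a s ≤ C * s ^ (1 / (2 * ρ)) := hC s hs
    _ ≤ √R * (R ^ ρ) ^ (1 / (2 * ρ)) := by gcongr
    _ = √R * √R := by
        rw [← Real.rpow_mul (by linarith), Real.sqrt_eq_rpow]
        field_simp
    _ = R := Real.mul_self_sqrt (by linarith)
end
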